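/- There exists a surjective group homomorphism from SU(2) onto SO(3) whose kernel is {1, −1}, the subgroup consisting of the identity matrix and its negative; in other words, SO(3) is isomorphic to the quotient of SU(2) by its center {±1}. -/

import Mathlib

open Matrix Complex

noncomputable section

/-- The special unitary group over a star ring is a group (inverse = conjugate transpose). -/
instance grpSU {n : Type*} [DecidableEq n] [Fintype n] {α : Type*} [CommRing α] [StarRing α] :
    Group ↥(Matrix.specialUnitaryGroup n α) :=
  { (inferInstance : Monoid ↥(Matrix.specialUnitaryGroup n α)) with
    inv := fun A => ⟨star A.1, by
      rw [Matrix.mem_specialUnitaryGroup_iff]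
      refine ⟨Unitary.star_mem A.2.1, ?_⟩
      have hdet : A.1.det = 1 := A.2.2
      rw [Matrix.star_eq_conjTranspose, Matrix.det_conjTranspose, hdet, star_one]⟩
    inv_mul_cancel := fun A => Subtype.ext A.2.1.1 }

/-- `SU(2)`, the special unitary group of `2 × 2` complex matrices. -/
abbrev SU2 := Matrix.specialUnitaryGroup (Fin 2) ℂ

lemma mem_su2 (a b : ℂ) (h : a * (starRingEnd ℂ) a + b * (starRingEnd ℂ) b = 1) :
    !![a, b; -((starRingEnd ℂ) b), (starRingEnd ℂ) a] ∈ Matrix.specialUnitaryGroup (Fin 2) ℂ := by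
  rw [Matrix.mem_specialUnitaryGroup_iff]
  constructor
  · rw [Matrix.mem_unitaryGroup_iff]
    ext i j
    fin_cases i <;> fin_cases j <;>
      simp [Matrix.mul_apply, Fin.sum_univ_two, Matrix.star_eq_conjTranspose,
        Matrix.conjTranspose_apply, Matrix.one_apply] <;>
      first
      | ring1
      | linear_combination h
  · show Matrix.det _ = 1
    rw [Matrix.det_fin_two_of]
    linear_combination h

/-- `SO(3)`, the special orthogonal group of `3 × 3` real matrices. -/
abbrev SO3 := Matrix.specialOrthogonalGroup (Fin 3) ℝ

/-- The negative of the identity matrix, as an element of `SU(2)`. -/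
def negOne : SU2 := ⟨!![-1, 0; 0, -1], by
  have h := mem_su2 (-1) 0 (by norm_num)
  simp only [map_zero, neg_zero, map_neg, _root_.map_one] at h
  exact h⟩

/-!
A unit quaternion `q = w + x i + y j + z k` is the same thing as the matrix
`!![w + x i, y + z i; -y + z i, w - x i]` of `SU(2)`, and conjugation `v ↦ q v q⋆` acts on the
imaginary quaternions by a rotation; this is the homomorphism `SU(2) → SO(3)`. Only the real unit
quaternions `±1` act trivially, and these are also the only unit quaternions commuting with `i`
and `j`, so the kernel is `{1, -1}` and equals the centre. Surjectivity comes from Euler angles: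
a rotation about the `z`-axis followed by one about the `y`-axis moves any unit vector to the
pole, a rotation fixing the pole is a rotation about the `z`-axis, and the rotation by `θ` about a
coordinate axis is the image of `cos (θ / 2) + sin (θ / 2)` times that axis.
-/

open Quaternion

def quaternionToMatrix (q : ℍ[ℝ]) : Matrix (Fin 2) (Fin 2) ℂ :=
  !![⟨q.re, q.imI⟩, ⟨q.imJ, q.imK⟩; ⟨-q.imJ, q.imK⟩, ⟨q.re, -q.imI⟩]

def matrixToQuaternion (A : Matrix (Fin 2) (Fin 2) ℂ) : ℍ[ℝ] :=
  ⟨(A 0 0).re, (A 0 0).im, (A 0 1).re, (A 0 1).im⟩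

lemma quaternionToMatrix_mul (p q : ℍ[ℝ]) :
    quaternionToMatrix (p * q) = quaternionToMatrix p * quaternionToMatrix q := by
  ext i j
  fin_cases i <;> fin_cases j <;>
    simp [quaternionToMatrix, Matrix.mul_apply, Complex.ext_iff, Quaternion.re_mul,
      Quaternion.imI_mul, Quaternion.imJ_mul, Quaternion.imK_mul] <;> constructor <;> ring

lemma quaternionToMatrix_one : quaternionToMatrix 1 = 1 := by
  ext i j
  fin_cases i <;> fin_cases j <;> simp [quaternionToMatrix, Complex.ext_iff]

lemma det_quaternionToMatrix (q : ℍ[ℝ]) : (quaternionToMatrix q).det = normSq q := by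
  simp only [quaternionToMatrix, Matrix.det_fin_two_of, normSq_def']
  apply Complex.ext <;> simp [sq] <;> ring

lemma quaternionToMatrix_star (q : ℍ[ℝ]) :
    quaternionToMatrix (star q) = star (quaternionToMatrix q) := by
  ext i j
  fin_cases i <;> fin_cases j <;> simp [quaternionToMatrix, Complex.ext_iff]

lemma quaternionToMatrix_mem_SU2 {q : ℍ[ℝ]} (hq : normSq q = 1) :
    quaternionToMatrix q ∈ SU2 := by
  refine Matrix.mem_specialUnitaryGroup_iff.2 ⟨Matrix.mem_unitaryGroup_iff.2 ?_, ?_⟩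
  · rw [← quaternionToMatrix_star, ← quaternionToMatrix_mul, self_mul_star, hq]
    exact quaternionToMatrix_one
  · simp [det_quaternionToMatrix, hq]

lemma star_eq_adjugate_of_mem_SU2 {A : Matrix (Fin 2) (Fin 2) ℂ} (hA : A ∈ SU2) :
    star A = A.adjugate := by
  obtain ⟨hU, hdet⟩ := Matrix.mem_specialUnitaryGroup_iff.1 hA
  have h : A * A.adjugate = 1 := by rw [Matrix.mul_adjugate, hdet, one_smul]
  rw [← Matrix.inv_eq_right_inv (Matrix.mem_unitaryGroup_iff.1 hU), Matrix.inv_eq_right_inv h]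

lemma quaternionToMatrix_matrixToQuaternion {A : Matrix (Fin 2) (Fin 2) ℂ} (hA : A ∈ SU2) :
    quaternionToMatrix (matrixToQuaternion A) = A := by
  have h := star_eq_adjugate_of_mem_SU2 hA
  rw [Matrix.adjugate_fin_two] at h
  have h₁₁ : starRingEnd ℂ (A 0 0) = A 1 1 := by simpa using congrFun (congrFun h 0) 0
  have h₁₀ : -starRingEnd ℂ (A 0 1) = A 1 0 := by
    simpa [neg_eq_iff_eq_neg] using congrFun (congrFun h 1) 0
  ext i j
  fin_cases i <;> fin_cases j <;>
    simp [quaternionToMatrix, matrixToQuaternion, Complex.ext_iff, ← h₁₁, ← h₁₀]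

@[simps]
def su2ToQuaternion : SU2 →* ℍ[ℝ] where
  toFun A := matrixToQuaternion A
  map_one' := by ext <;> simp [matrixToQuaternion]
  map_mul' A B := by
    rw [Submonoid.coe_mul, ← quaternionToMatrix_matrixToQuaternion A.2,
      ← quaternionToMatrix_matrixToQuaternion B.2, ← quaternionToMatrix_mul]
    rfl

lemma su2ToQuaternion_injective : Function.Injective su2ToQuaternion := fun A B h =>
  Subtype.ext <| by
    rw [← quaternionToMatrix_matrixToQuaternion A.2, ← quaternionToMatrix_matrixToQuaternion B.2]
    exact congrArg quaternionToMatrix h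

lemma normSq_su2ToQuaternion (A : SU2) : normSq (su2ToQuaternion A) = 1 := by
  have h := det_quaternionToMatrix (su2ToQuaternion A)
  rw [su2ToQuaternion_apply, quaternionToMatrix_matrixToQuaternion A.2,
    (Matrix.mem_specialUnitaryGroup_iff.1 A.2).2] at h
  exact_mod_cast h.symm

lemma su2ToQuaternion_negOne : su2ToQuaternion negOne = -1 := by
  ext <;> simp [matrixToQuaternion, negOne]

def su2OfQuaternion {q : ℍ[ℝ]} (hq : normSq q = 1) : SU2 :=
  ⟨quaternionToMatrix q, quaternionToMatrix_mem_SU2 hq⟩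

/-- The matrix of the rotation `v ↦ q v q⋆` of the imaginary quaternions, in the basis `i, j, k`. -/
def rotationMatrix (q : ℍ[ℝ]) : Matrix (Fin 3) (Fin 3) ℝ :=
  let w := q.re; let x := q.imI; let y := q.imJ; let z := q.imK
  !![w^2 + x^2 - y^2 - z^2, 2 * (x*y - w*z), 2 * (x*z + w*y);
     2 * (x*y + w*z), w^2 - x^2 + y^2 - z^2, 2 * (y*z - w*x);
     2 * (x*z - w*y), 2 * (y*z + w*x), w^2 - x^2 - y^2 + z^2]

def rotationMatrixHom : ℍ[ℝ] →* Matrix (Fin 3) (Fin 3) ℝ where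
  toFun := rotationMatrix
  map_one' := by
    ext i j
    fin_cases i <;> fin_cases j <;> simp [rotationMatrix]
  map_mul' p q := by
    ext i j
    fin_cases i <;> fin_cases j <;>
      simp [rotationMatrix, Matrix.mul_apply, Fin.sum_univ_three, Quaternion.re_mul,
        Quaternion.imI_mul, Quaternion.imJ_mul, Quaternion.imK_mul] <;> ring

lemma rotationMatrix_mem_SO3 {q : ℍ[ℝ]} (hq : normSq q = 1) : rotationMatrix q ∈ SO3 := by
  rw [normSq_def'] at hq
  obtain ⟨w, x, y, z⟩ := q
  dsimp only at hq
  refine Matrix.mem_specialOrthogonalGroup_iff.2 ⟨(Matrix.mem_orthogonalGroup_iff _ _).2 ?_, ?_⟩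
  · ext i j
    fin_cases i <;> fin_cases j <;>
      simp [rotationMatrix, Matrix.mul_apply, Fin.sum_univ_three] <;>
      first | ring1 | linear_combination (w^2 + x^2 + y^2 + z^2 + 1) * hq
  · rw [Matrix.det_fin_three]
    simp only [rotationMatrix, Fin.isValue, Matrix.of_apply, Matrix.cons_val', Matrix.cons_val_zero,
      Matrix.cons_val_fin_one, Matrix.cons_val_one, Matrix.cons_val]
    linear_combination ((w^2 + x^2 + y^2 + z^2)^2 + (w^2 + x^2 + y^2 + z^2) + 1) * hq

lemma rotationMatrix_neg (q : ℍ[ℝ]) : rotationMatrix (-q) = rotationMatrix q := by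
  ext i j
  fin_cases i <;> fin_cases j <;> simp [rotationMatrix]

lemma im_eq_zero_of_rotationMatrix_eq_one {q : ℍ[ℝ]} (hq : normSq q = 1)
    (h : rotationMatrix q = 1) : q.im = 0 := by
  rw [normSq_def'] at hq
  have h₀ : q.re ^ 2 + q.imI ^ 2 - q.imJ ^ 2 - q.imK ^ 2 = 1 := by
    simpa [rotationMatrix] using congrFun (congrFun h 0) 0
  have h₁ : q.re ^ 2 - q.imI ^ 2 + q.imJ ^ 2 - q.imK ^ 2 = 1 := by
    simpa [rotationMatrix] using congrFun (congrFun h 1) 1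
  have h₂ : q.re ^ 2 - q.imI ^ 2 - q.imJ ^ 2 + q.imK ^ 2 = 1 := by
    simpa [rotationMatrix] using congrFun (congrFun h 2) 2
  have hx : q.imI = 0 := pow_eq_zero_iff two_ne_zero |>.1 (by linarith)
  have hy : q.imJ = 0 := pow_eq_zero_iff two_ne_zero |>.1 (by linarith)
  have hz : q.imK = 0 := pow_eq_zero_iff two_ne_zero |>.1 (by linarith)
  ext <;> simp [hx, hy, hz]

lemma Quaternion.eq_one_or_eq_neg_one_of_im_eq_zero {R : Type*} [CommRing R] [NoZeroDivisors R]
    {q : ℍ[R]} (hq : normSq q = 1) (him : q.im = 0) : q = 1 ∨ q = -1 := by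
  have hre : q = q.re := by rw [← re_add_im q, him, add_zero, re_coe]
  rw [hre, normSq_coe, sq, mul_self_eq_one_iff] at hq
  rcases hq with h | h <;> rw [hre, h] <;> simp

lemma rotationMatrix_eq_one_iff {q : ℍ[ℝ]} (hq : normSq q = 1) :
    rotationMatrix q = 1 ↔ q = 1 ∨ q = -1 := by
  refine ⟨fun h => eq_one_or_eq_neg_one_of_im_eq_zero hq (im_eq_zero_of_rotationMatrix_eq_one hq h),
    ?_⟩
  rintro (rfl | rfl)
  · exact map_one rotationMatrixHom
  · rw [rotationMatrix_neg]
    exact map_one rotationMatrixHom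

def doubleCover : SU2 →* SO3 :=
  (rotationMatrixHom.comp su2ToQuaternion).codRestrict SO3
    fun A => rotationMatrix_mem_SO3 (normSq_su2ToQuaternion A)

lemma coe_doubleCover (A : SU2) :
    (doubleCover A : Matrix (Fin 3) (Fin 3) ℝ) = rotationMatrix (su2ToQuaternion A) := rfl

lemma mem_ker_doubleCover_iff {A : SU2} :
    A ∈ doubleCover.ker ↔ su2ToQuaternion A = 1 ∨ su2ToQuaternion A = -1 := by
  rw [MonoidHom.mem_ker, ← Subtype.val_inj, coe_doubleCover, OneMemClass.coe_one,
    rotationMatrix_eq_one_iff (normSq_su2ToQuaternion A)]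

lemma coe_ker_doubleCover : (doubleCover.ker : Set SU2) = {1, negOne} := by
  ext A
  rw [SetLike.mem_coe, mem_ker_doubleCover_iff, ← su2ToQuaternion_negOne, ← map_one su2ToQuaternion,
    su2ToQuaternion_injective.eq_iff, su2ToQuaternion_injective.eq_iff]
  rfl

lemma Quaternion.im_eq_zero_of_commute {R : Type*} [CommRing R] [IsAddTorsionFree R]
    {q : ℍ[R]} (hi : Commute q ⟨0, 1, 0, 0⟩) (hj : Commute q ⟨0, 0, 1, 0⟩) : q.im = 0 := by
  have hJ := congrArg (·.imJ) hi.eq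
  have hK := congrArg (·.imK) hi.eq
  have hI := congrArg (·.imK) hj.eq
  simp only [imJ_mul q ⟨0, 1, 0, 0⟩, imJ_mul ⟨0, 1, 0, 0⟩ q, imK_mul q ⟨0, 1, 0, 0⟩,
    imK_mul ⟨0, 1, 0, 0⟩ q, imK_mul q ⟨0, 0, 1, 0⟩, imK_mul ⟨0, 0, 1, 0⟩ q] at hJ hK hI
  simp only [mul_zero, zero_mul, mul_one, one_mul, add_zero, zero_add, sub_zero, zero_sub,
    self_eq_neg, neg_eq_self] at hJ hK hI
  ext <;> simp [hI, hJ, hK]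

lemma negOne_mem_center : negOne ∈ Subgroup.center SU2 :=
  Subgroup.mem_center_iff.2 fun A => su2ToQuaternion_injective <| by
    rw [map_mul, map_mul, su2ToQuaternion_negOne, mul_neg_one, neg_one_mul]

lemma center_eq_ker_doubleCover : Subgroup.center SU2 = doubleCover.ker := by
  refine le_antisymm (fun A hA => ?_) fun A hA => ?_
  · have hcomm {q : ℍ[ℝ]} (hq : normSq q = 1) : Commute (su2ToQuaternion A) q := by
      have h : Commute A (su2OfQuaternion hq) := (Subgroup.mem_center_iff.1 hA _).symm
      exact h.map su2ToQuaternion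
    have him := im_eq_zero_of_commute
      (hcomm ((normSq_def' (⟨0, 1, 0, 0⟩ : ℍ[ℝ])).trans (by norm_num)))
      (hcomm ((normSq_def' (⟨0, 0, 1, 0⟩ : ℍ[ℝ])).trans (by norm_num)))
    exact mem_ker_doubleCover_iff.2
      (eq_one_or_eq_neg_one_of_im_eq_zero (normSq_su2ToQuaternion A) him)
  · rw [← SetLike.mem_coe, coe_ker_doubleCover] at hA
    rcases hA with rfl | rfl
    exacts [one_mem _, negOne_mem_center]

lemma Complex.exists_norm_eq_one_mul_eq_norm (z : ℂ) : ∃ u : ℂ, ‖u‖ = 1 ∧ u * z = ‖z‖ := by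
  refine ⟨exp (-(arg z : ℂ) * I), ?_, ?_⟩
  · rw [← ofReal_neg, norm_exp_ofReal_mul_I]
  · calc exp (-(arg z : ℂ) * I) * z = exp (-(arg z : ℂ) * I) * (‖z‖ * exp (arg z * I)) := by
          rw [norm_mul_exp_arg_mul_I]
      _ = ‖z‖ := by rw [mul_left_comm, ← exp_add, neg_mul, neg_add_cancel, exp_zero, mul_one]

def rotZ (u : ℂ) : Matrix (Fin 3) (Fin 3) ℝ := !![u.re, -u.im, 0; u.im, u.re, 0; 0, 0, 1]

def rotY (u : ℂ) : Matrix (Fin 3) (Fin 3) ℝ := !![u.re, 0, u.im; 0, 1, 0; -u.im, 0, u.re]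

lemma rotZ_mulVec (u z : ℂ) (t : ℝ) :
    rotZ u *ᵥ ![z.re, z.im, t] = ![(u * z).re, (u * z).im, t] := by
  ext i
  fin_cases i <;> simp [rotZ, Matrix.mulVec, dotProduct, Fin.sum_univ_three] <;> ring

lemma rotY_mulVec (u z : ℂ) (y : ℝ) :
    rotY u *ᵥ ![z.im, y, z.re] = ![(u * z).im, y, (u * z).re] := by
  ext i
  fin_cases i <;> simp [rotY, Matrix.mulVec, dotProduct, Fin.sum_univ_three]
  ring

lemma exists_rotY_rotZ_mulVec_eq {p q t : ℝ} (h : p ^ 2 + q ^ 2 + t ^ 2 = 1) :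
    ∃ u₁ u₂ : ℂ, ‖u₁‖ = 1 ∧ ‖u₂‖ = 1 ∧ rotY u₂ *ᵥ (rotZ u₁ *ᵥ ![p, q, t]) = ![0, 0, 1] := by
  obtain ⟨u₁, hu₁, hz₁⟩ := Complex.exists_norm_eq_one_mul_eq_norm ⟨p, q⟩
  obtain ⟨u₂, hu₂, hz₂⟩ := Complex.exists_norm_eq_one_mul_eq_norm ⟨t, ‖(⟨p, q⟩ : ℂ)‖⟩
  have hnorm : ‖(⟨t, ‖(⟨p, q⟩ : ℂ)‖⟩ : ℂ)‖ = 1 := by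
    have hr : ‖(⟨p, q⟩ : ℂ)‖ ^ 2 = p ^ 2 + q ^ 2 := by
      rw [Complex.sq_norm, Complex.normSq_mk]; ring
    rw [Complex.norm_def, Real.sqrt_eq_one, Complex.normSq_mk]
    linear_combination h + hr
  have step₁ : rotZ u₁ *ᵥ ![p, q, t] = ![‖(⟨p, q⟩ : ℂ)‖, 0, t] := by
    simpa [hz₁] using rotZ_mulVec u₁ ⟨p, q⟩ t
  have step₂ : rotY u₂ *ᵥ ![‖(⟨p, q⟩ : ℂ)‖, 0, t] = ![0, 0, 1] := by
    simpa [hz₂, hnorm] using rotY_mulVec u₂ ⟨t, ‖(⟨p, q⟩ : ℂ)‖⟩ 0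
  exact ⟨u₁, u₂, hu₁, hu₂, by rw [step₁, step₂]⟩

lemma exists_eq_rotZ_of_mulVec_eq {M : Matrix (Fin 3) (Fin 3) ℝ} (hM : M ∈ SO3)
    (h : M *ᵥ ![0, 0, 1] = ![0, 0, 1]) : ∃ u : ℂ, ‖u‖ = 1 ∧ M = rotZ u := by
  obtain ⟨⟨hStarMul, hMulStar⟩, hdet⟩ := hM
  have e₀ : M 0 2 = 0 := by simpa [Matrix.mulVec, dotProduct, Fin.sum_univ_three] using congrFun h 0
  have e₁ : M 1 2 = 0 := by simpa [Matrix.mulVec, dotProduct, Fin.sum_univ_three] using congrFun h 1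
  have e₂ : M 2 2 = 1 := by simpa [Matrix.mulVec, dotProduct, Fin.sum_univ_three] using congrFun h 2
  have hrow : M 2 0 ^ 2 + M 2 1 ^ 2 = 0 := by
    simpa [Matrix.mul_apply, Fin.sum_univ_three, e₂, sq] using congrFun (congrFun hMulStar 2) 2
  have h₂₀ : M 2 0 = 0 := by nlinarith [sq_nonneg (M 2 0), sq_nonneg (M 2 1)]
  have h₂₁ : M 2 1 = 0 := by nlinarith [sq_nonneg (M 2 0), sq_nonneg (M 2 1)]
  have hc₀ : M 0 0 * M 0 0 + M 1 0 * M 1 0 = 1 := by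
    simpa [Matrix.mul_apply, Fin.sum_univ_three, h₂₀] using congrFun (congrFun hStarMul 0) 0
  have hc₀₁ : M 0 0 * M 0 1 + M 1 0 * M 1 1 = 0 := by
    simpa [Matrix.mul_apply, Fin.sum_univ_three, h₂₀] using congrFun (congrFun hStarMul 0) 1
  have hdet' : M 0 0 * M 1 1 - M 0 1 * M 1 0 = 1 := by
    simpa [Matrix.det_fin_three, e₀, e₁, e₂, h₂₀, h₂₁] using hdet
  have h₁₁ : M 1 1 = M 0 0 := by
    linear_combination M 0 0 * hdet' + M 1 0 * hc₀₁ - M 1 1 * hc₀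
  have h₀₁ : M 0 1 = -M 1 0 := by
    linear_combination M 0 0 * hc₀₁ - M 1 0 * hdet' - M 0 1 * hc₀
  refine ⟨⟨M 0 0, M 1 0⟩, ?_, ?_⟩
  · rw [Complex.norm_def, Real.sqrt_eq_one, Complex.normSq_mk]
    linear_combination hc₀
  · ext i j
    fin_cases i <;> fin_cases j <;> simp [rotZ, e₀, e₁, e₂, h₂₀, h₂₁, h₁₁, h₀₁]

lemma Complex.exists_sq_eq_of_norm_eq_one {u : ℂ} (hu : ‖u‖ = 1) :
    ∃ w : ℂ, w.re ^ 2 + w.im ^ 2 = 1 ∧ w ^ 2 = u := by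
  obtain ⟨w, rfl⟩ := IsAlgClosed.exists_pow_nat_eq u two_pos
  refine ⟨w, ?_, rfl⟩
  rw [norm_pow, pow_eq_one_iff_of_nonneg (norm_nonneg w) two_ne_zero] at hu
  have h := Complex.sq_norm w
  rw [hu, one_pow, Complex.normSq_apply] at h
  linear_combination -h

lemma rotationMatrix_eq_rotZ_sq {w : ℂ} (hw : w.re ^ 2 + w.im ^ 2 = 1) :
    rotationMatrix ⟨w.re, 0, 0, w.im⟩ = rotZ (w ^ 2) := by
  ext i j
  fin_cases i <;> fin_cases j <;> simp [rotationMatrix, rotZ, sq] <;>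
    first | ring1 | linear_combination hw

lemma rotationMatrix_eq_rotY_sq {w : ℂ} (hw : w.re ^ 2 + w.im ^ 2 = 1) :
    rotationMatrix ⟨w.re, 0, w.im, 0⟩ = rotY (w ^ 2) := by
  ext i j
  fin_cases i <;> fin_cases j <;> simp [rotationMatrix, rotY, sq] <;>
    first | ring1 | linear_combination hw

lemma exists_doubleCover_eq_rotZ {u : ℂ} (hu : ‖u‖ = 1) :
    ∃ A : SU2, (doubleCover A : Matrix (Fin 3) (Fin 3) ℝ) = rotZ u := by
  obtain ⟨w, hw, rfl⟩ := Complex.exists_sq_eq_of_norm_eq_one hu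
  have hq : normSq (⟨w.re, 0, 0, w.im⟩ : ℍ[ℝ]) = 1 := (normSq_def' _).trans (by simpa using hw)
  exact ⟨su2OfQuaternion hq, rotationMatrix_eq_rotZ_sq hw⟩

lemma exists_doubleCover_eq_rotY {u : ℂ} (hu : ‖u‖ = 1) :
    ∃ A : SU2, (doubleCover A : Matrix (Fin 3) (Fin 3) ℝ) = rotY u := by
  obtain ⟨w, hw, rfl⟩ := Complex.exists_sq_eq_of_norm_eq_one hu
  have hq : normSq (⟨w.re, 0, w.im, 0⟩ : ℍ[ℝ]) = 1 := (normSq_def' _).trans (by simpa using hw)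
  exact ⟨su2OfQuaternion hq, rotationMatrix_eq_rotY_sq hw⟩

lemma doubleCover_surjective : Function.Surjective doubleCover := by
  intro M
  have hcol : M.1 0 2 ^ 2 + M.1 1 2 ^ 2 + M.1 2 2 ^ 2 = 1 := by
    simpa [Matrix.mul_apply, Fin.sum_univ_three, sq] using congrFun (congrFun M.2.1.1 2) 2
  have hcol' : M.1 *ᵥ ![0, 0, 1] = ![M.1 0 2, M.1 1 2, M.1 2 2] := by
    ext i
    fin_cases i <;> simp [Matrix.mulVec, dotProduct, Fin.sum_univ_three]
  obtain ⟨u₁, u₂, hu₁, hu₂, hv⟩ := exists_rotY_rotZ_mulVec_eq hcol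
  obtain ⟨A₁, hA₁⟩ := exists_doubleCover_eq_rotZ hu₁
  obtain ⟨A₂, hA₂⟩ := exists_doubleCover_eq_rotY hu₂
  obtain ⟨u, hu, hN⟩ := exists_eq_rotZ_of_mulVec_eq (doubleCover (A₂ * A₁) * M).2 <| by
    rw [Submonoid.coe_mul, map_mul, Submonoid.coe_mul, hA₁, hA₂, ← Matrix.mulVec_mulVec,
      ← Matrix.mulVec_mulVec, hcol', hv]
  obtain ⟨A₃, hA₃⟩ := exists_doubleCover_eq_rotZ hu
  refine ⟨(A₂ * A₁)⁻¹ * A₃, ?_⟩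
  rw [map_mul, map_inv, inv_mul_eq_iff_eq_mul]
  exact Subtype.ext (hA₃.trans hN.symm)

/-- There is a surjective group homomorphism `SU(2) → SO(3)` whose kernel is `{1, -1}`;
in other words, `SO(3)` is isomorphic to the quotient of `SU(2)` by its center. -/
theorem su2_double_cover_so3 :
    ∃ φ : SU2 →* SO3, Function.Surjective φ ∧
      ((φ.ker : Set SU2) = {1, negOne}) ∧
      Nonempty (SO3 ≃* (SU2 ⧸ Subgroup.center SU2)) := by
  refine ⟨doubleCover, doubleCover_surjective, coe_ker_doubleCover, ⟨?_⟩⟩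
  exact (QuotientGroup.quotientKerEquivOfSurjective _ doubleCover_surjective).symm.trans
    (QuotientGroup.quotientMulEquivOfEq center_eq_ker_doubleCover.symm)
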